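/- The zero set of the sigma function is exactly the lattice Λ: for z ∈ ℂ, σ(z) = 0 if and only if there exist a, b ∈ ℤ with z = 2πi·a + 2πi·b·τ. -/

import Mathlib

/-- The nome `q = exp(2πiτ)`. -/
noncomputable def nome (τ : ℂ) : ℂ := Complex.exp (2 * Real.pi * Complex.I * τ)

/-- The Weierstrass-type sigma function
`σ(z) = (e^{z/2} - e^{-z/2}) ∏_{n ≥ 1} (1 - qⁿ eᶻ)(1 - qⁿ e^{-z})/(1 - qⁿ)²`,
where the product over integers `n ≥ 1` is encoded as a product over `n : ℕ`
with exponent `n + 1`. -/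
noncomputable def wsigma (τ : ℂ) (z : ℂ) : ℂ :=
  (Complex.exp (z / 2) - Complex.exp (-z / 2)) *
    ∏' n : ℕ, ((1 - nome τ ^ (n + 1) * Complex.exp z) *
      (1 - nome τ ^ (n + 1) * Complex.exp (-z)) / (1 - nome τ ^ (n + 1)) ^ 2)


/-!
The first factor `e^{z/2} - e^{-z/2} = e^{-z/2} (e^z - 1)` vanishes exactly on `2πiℤ`. Each of the
products `∏ (1 - qⁿ u)` converges absolutely since `‖q‖ < 1`, and an absolutely convergent product
`∏ (1 + fₙ)` vanishes only if one of its factors does; the denominator `∏ (1 - qⁿ)²` is therefore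
nonzero, and the infinite product vanishes exactly when `qⁿ e^z = 1` or `qⁿ e^{-z} = 1` for some
`n ≥ 1`, i.e. when `e^z = q^b` for some integer `b ≠ 0`. Since `q^b = exp (2πi b τ)`, this says
`z ∈ 2πi b τ + 2πiℤ`.
-/

open Complex

section NormedRing

variable {ι R : Type*} [NormedCommRing R] [NormMulClass R] [NormOneClass R] [CompleteSpace R]
  {f : ι → R}

theorem tprod_one_add_eq_zero_iff (hf : Summable (‖f ·‖)) :
    ∏' i, (1 + f i) = 0 ↔ ∃ i, 1 + f i = 0 := by
  refine ⟨fun h => ?_, tprod_of_exists_eq_zero⟩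
  by_contra! hne
  exact tprod_one_add_ne_zero_of_summable hne hf h

end NormedRing

section NormedField

variable {K : Type*} [NormedField K] {q : K}

theorem summable_norm_pow_succ_mul (hq : ‖q‖ < 1) (u : K) :
    Summable fun n : ℕ => ‖q ^ (n + 1) * u‖ := by
  simpa [norm_mul, norm_pow, pow_succ, mul_assoc] using
    (summable_geometric_of_lt_one (norm_nonneg q) hq).mul_right (‖q‖ * ‖u‖)

variable [CompleteSpace K]

theorem multipliable_one_sub_pow_succ_mul (hq : ‖q‖ < 1) (u : K) :
    Multipliable fun n : ℕ => 1 - q ^ (n + 1) * u := by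
  simpa [sub_eq_add_neg] using
    multipliable_one_add_of_summable (f := fun n : ℕ => -(q ^ (n + 1) * u))
      (by simpa using summable_norm_pow_succ_mul hq u)

theorem tprod_one_sub_pow_succ_mul_eq_zero_iff (hq : ‖q‖ < 1) (u : K) :
    ∏' n : ℕ, (1 - q ^ (n + 1) * u) = 0 ↔ ∃ n : ℕ, q ^ (n + 1) * u = 1 := by
  have h := tprod_one_add_eq_zero_iff (f := fun n : ℕ => -(q ^ (n + 1) * u))
    (by simpa only [norm_neg] using summable_norm_pow_succ_mul hq u)
  simp only [← sub_eq_add_neg, sub_eq_zero] at h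
  simpa only [eq_comm (a := (1 : K))] using h

theorem tprod_one_sub_pow_succ_ne_zero (hq : ‖q‖ < 1) :
    ∏' n : ℕ, (1 - q ^ (n + 1)) ≠ 0 := by
  have := tprod_one_sub_pow_succ_mul_eq_zero_iff hq 1
  simp only [mul_one] at this
  rw [Ne, this, not_exists]
  intro n hn
  have : ‖q ^ (n + 1)‖ < 1 := by
    rw [norm_pow]; exact pow_lt_one₀ (norm_nonneg q) hq n.succ_ne_zero
  simp [hn] at this

theorem tprod_one_sub_mul_one_sub_div_sq_eq_zero_iff (hq : ‖q‖ < 1) (u v : K) :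
    ∏' n : ℕ, ((1 - q ^ (n + 1) * u) * (1 - q ^ (n + 1) * v) / (1 - q ^ (n + 1)) ^ 2) = 0 ↔
      ∃ n : ℕ, q ^ (n + 1) * u = 1 ∨ q ^ (n + 1) * v = 1 := by
  have hden := tprod_one_sub_pow_succ_ne_zero hq
  have hprod := ((multipliable_one_sub_pow_succ_mul hq u).hasProd.mul
    (multipliable_one_sub_pow_succ_mul hq v).hasProd).div₀
    (by simpa using ((multipliable_one_sub_pow_succ_mul hq 1).hasProd.pow 2))
    (pow_ne_zero 2 hden)
  rw [hprod.tprod_eq, div_eq_zero_iff, mul_eq_zero, tprod_one_sub_pow_succ_mul_eq_zero_iff hq,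
    tprod_one_sub_pow_succ_mul_eq_zero_iff hq, ← exists_or]
  simp [hden]

end NormedField

theorem Int.exists_iff_zero_or_exists_nat {P : ℤ → Prop} :
    (∃ b, P b) ↔ P 0 ∨ ∃ n : ℕ, P (-(n + 1)) ∨ P (n + 1) := by
  refine ⟨?_, ?_⟩
  · rintro ⟨(_ | n) | n, hb⟩
    · exact .inl hb
    · exact .inr ⟨n, .inr (by exact_mod_cast hb)⟩
    · exact .inr ⟨n, .inl (by rwa [Int.negSucc_eq] at hb)⟩
  · rintro (h | ⟨n, h | h⟩) <;> exact ⟨_, h⟩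

theorem exp_half_sub_exp_neg_half_eq_zero_iff (z : ℂ) :
    exp (z / 2) - exp (-z / 2) = 0 ↔ exp z = 1 := by
  have : exp (z / 2) - exp (-z / 2) = exp (-z / 2) * (exp z - 1) := by
    rw [mul_sub, ← exp_add, mul_one]; ring_nf
  rw [this, mul_eq_zero, sub_eq_zero, or_iff_right (exp_ne_zero _)]

theorem norm_nome_lt_one {τ : ℂ} (hτ : 0 < τ.im) : ‖nome τ‖ < 1 := by
  rw [nome, norm_exp, Real.exp_lt_one_iff]
  simpa using mul_pos Real.two_pi_pos hτ

theorem nome_zpow (τ : ℂ) (b : ℤ) : nome τ ^ b = exp (2 * Real.pi * I * b * τ) := by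
  rw [nome, ← exp_int_mul]; ring_nf

theorem exists_eq_add_int_mul_iff_exp_eq_nome_zpow (τ z : ℂ) (b : ℤ) :
    (∃ a : ℤ, z = 2 * Real.pi * I * a + 2 * Real.pi * I * b * τ) ↔ exp z = nome τ ^ b := by
  rw [nome_zpow, exp_eq_exp_iff_exists_int]
  exact exists_congr fun a => by constructor <;> intro h <;> linear_combination h

theorem wsigma_zero_iff_mem_lattice (τ : ℂ) (hτ : 0 < τ.im) :
    ∀ z : ℂ, wsigma τ z = 0 ↔
      ∃ a b : ℤ, z = 2 * Real.pi * Complex.I * a + 2 * Real.pi * Complex.I * b * τ := by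
  intro z
  have hq0 : nome τ ≠ 0 := exp_ne_zero _
  rw [wsigma, mul_eq_zero, exp_half_sub_exp_neg_half_eq_zero_iff,
    tprod_one_sub_mul_one_sub_div_sq_eq_zero_iff (norm_nome_lt_one hτ), exists_comm]
  simp_rw [exists_eq_add_int_mul_iff_exp_eq_nome_zpow]
  rw [Int.exists_iff_zero_or_exists_nat]
  refine or_congr (by rw [zpow_zero]) (exists_congr fun n => ?_)
  have hpow : nome τ ^ ((n : ℤ) + 1) = nome τ ^ (n + 1) := by
    exact_mod_cast zpow_natCast (nome τ) (n + 1)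
  rw [hpow, zpow_neg, hpow, exp_neg, mul_inv_eq_one₀ (exp_ne_zero z), mul_comm,
    mul_eq_one_iff_eq_inv₀ (pow_ne_zero _ hq0), eq_comm (a := nome τ ^ (n + 1))]
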